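/- Define α : e(2) → su(1,2) on the 3-dimensional Lie algebra e(2) = R² ⋊ so(2) of Euclidean plane isometries, with basis coordinates (x, X_1, X_2) and Lie bracket given by the matrix realization in which e(2) consists of the 3x3 real matrices with rows (0,0,0), (x/2, 0, -X_1), (X_2, X_1, 0), by α(x, X_1, X_2) = the 3x3 complex matrix with rows (ix/16, -(5/16)X_1 - (3i/16)X_2, -15ix/256), (X_1 + iX_2, -ix/8, (5/16)X_1 - (3i/16)X_2), (ix, -X_1 + iX_2, ix/16). Then α is an injective R-linear map into su(1,2), and the 'curvature' τ(U, V) := [α(U), α(V)] - α([U, V]) is given, for U = (x, X_1, X_2) and V = (y, Y_1, Y_2), by the matrix with all entries zero except the (0,1) entry equal to (3i/32)yX_1 - (3/32)yX_2 - (3i/32)xY_1 + (3/32)xY_2 and the (1,2) entry equal to (3i/32)yX_1 + (3/32)yX_2 - (3i/32)xY_1 - (3/32)xY_2. In particular α is not a Lie algebra homomorphism. -/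
import Mathlib


open Complex Matrix ComplexConjugate

noncomputable section

/-- the matrix realization of `e(2)`: rows `(0,0,0)`, `(x/2, 0, -X₁)`, `(X₂, X₁, 0)`. -/
def e2mat (u : ℝ × ℝ × ℝ) : Matrix (Fin 3) (Fin 3) ℝ :=
  !![0, 0, 0; u.1 / 2, 0, -u.2.1; u.2.2, u.2.1, 0]

/-- the Lie bracket of `e(2)` in the coordinates `(x, X₁, X₂)`, read off from the matrix
realization. -/
def e2br (u v : ℝ × ℝ × ℝ) : ℝ × ℝ × ℝ :=
  (2 * (v.2.1 * u.2.2 - u.2.1 * v.2.2), 0, (u.2.1 * v.1 - v.2.1 * u.1) / 2)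

/-- the linear map `α : e(2) → su(1,2)` from the normal extension. -/
def alphaE2 (u : ℝ × ℝ × ℝ) : Matrix (Fin 3) (Fin 3) ℂ :=
  !![Complex.I * u.1 / 16, -(5 / 16 : ℂ) * u.2.1 - (3 * Complex.I / 16) * u.2.2,
       -(15 : ℂ) * Complex.I * u.1 / 256;
     (u.2.1 : ℂ) + Complex.I * u.2.2, -Complex.I * u.1 / 8,
       (5 / 16 : ℂ) * u.2.1 - (3 * Complex.I / 16) * u.2.2;
     Complex.I * u.1, -(u.2.1 : ℂ) + Complex.I * u.2.2, Complex.I * u.1 / 16]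

/-- the Hermitian form of signature `(1,2)` defining `su(1,2)`. -/
def Jform : Matrix (Fin 3) (Fin 3) ℂ := !![0, 0, 1; 0, 1, 0; 1, 0, 0]

/-- the curvature `τ(U,V) = [α(U), α(V)] - α([U,V])`. -/
def tauE2 (u v : ℝ × ℝ × ℝ) : Matrix (Fin 3) (Fin 3) ℂ :=
  alphaE2 u * alphaE2 v - alphaE2 v * alphaE2 u - alphaE2 (e2br u v)

set_option maxHeartbeats 2000000 in
/-- `e2br` is the bracket of the matrix realization of `e(2)`; the map `α`
is an injective ℝ-linear map into `su(1,2)`; the curvature `τ(U,V) = [αU, αV] - α[U,V]`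
is the matrix whose only nonzero entries are the `(0,1)` entry
`(3i/32)yX₁ - (3/32)yX₂ - (3i/32)xY₁ + (3/32)xY₂` and the `(1,2)` entry
`(3i/32)yX₁ + (3/32)yX₂ - (3i/32)xY₁ - (3/32)xY₂`; in particular `α` is not a Lie
algebra homomorphism. -/
theorem alphaE2_properties :
    (∀ u v : ℝ × ℝ × ℝ, e2mat (e2br u v) = e2mat u * e2mat v - e2mat v * e2mat u) ∧
    (∀ u v : ℝ × ℝ × ℝ, ∀ c : ℝ,
      alphaE2 (u + v) = alphaE2 u + alphaE2 v ∧ alphaE2 (c • u) = (c : ℂ) • alphaE2 u) ∧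
    Function.Injective alphaE2 ∧
    (∀ u : ℝ × ℝ × ℝ,
      (alphaE2 u).trace = 0 ∧ (alphaE2 u).conjTranspose * Jform + Jform * alphaE2 u = 0) ∧
    (∀ u v : ℝ × ℝ × ℝ,
      tauE2 u v =
        !![0, (3 * Complex.I / 32) * v.1 * u.2.1 - (3 / 32 : ℂ) * v.1 * u.2.2
              - (3 * Complex.I / 32) * u.1 * v.2.1 + (3 / 32 : ℂ) * u.1 * v.2.2, 0;
           0, 0, (3 * Complex.I / 32) * v.1 * u.2.1 + (3 / 32 : ℂ) * v.1 * u.2.2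
              - (3 * Complex.I / 32) * u.1 * v.2.1 - (3 / 32 : ℂ) * u.1 * v.2.2;
           0, 0, 0]) ∧
    (∃ u v : ℝ × ℝ × ℝ,
      alphaE2 u * alphaE2 v - alphaE2 v * alphaE2 u ≠ alphaE2 (e2br u v)) := by
  have htau : ∀ u v : ℝ × ℝ × ℝ,
      tauE2 u v =
        !![0, (3 * Complex.I / 32) * v.1 * u.2.1 - (3 / 32 : ℂ) * v.1 * u.2.2
              - (3 * Complex.I / 32) * u.1 * v.2.1 + (3 / 32 : ℂ) * u.1 * v.2.2, 0;
           0, 0, (3 * Complex.I / 32) * v.1 * u.2.1 + (3 / 32 : ℂ) * v.1 * u.2.2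
              - (3 * Complex.I / 32) * u.1 * v.2.1 - (3 / 32 : ℂ) * u.1 * v.2.2;
           0, 0, 0] := by
    intro u v
    obtain ⟨x, X1, X2⟩ := u
    obtain ⟨y, Y1, Y2⟩ := v
    ext i j
    fin_cases i <;> fin_cases j <;>
      simp [tauE2, alphaE2, e2br, Matrix.mul_apply, Fin.sum_univ_three]
    all_goals ring_nf
    all_goals try simp only [Complex.I_sq]
    all_goals try ring
    all_goals rfl
  refine ⟨?_, ?_, ?_, ?_, htau, ?_⟩
  · intro u v
    ext i j
    fin_cases i <;> fin_cases j <;>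
      simp [e2mat, e2br, Matrix.mul_apply, Fin.sum_univ_three]
    all_goals try ring
    all_goals rfl
  · intro u v c
    constructor <;> ext i j <;> fin_cases i <;> fin_cases j <;>
      simp [alphaE2, Prod.fst_add, Prod.snd_add, Prod.smul_fst, Prod.smul_snd] <;>
      push_cast <;> ring
  · intro u v h
    have h10 := congrFun (congrFun h 1) 0
    have h20 := congrFun (congrFun h 2) 0
    simp [alphaE2, Complex.ext_iff] at h10 h20
    exact Prod.ext h20 (Prod.ext h10.1 h10.2)
  · intro u
    constructor
    · simp [Matrix.trace_fin_three, alphaE2]; ring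
    · ext i j
      fin_cases i <;> fin_cases j <;>
        simp [alphaE2, Jform, Matrix.mul_apply, Fin.sum_univ_three,
          Matrix.conjTranspose_apply, map_ofNat, Complex.conj_ofReal, Complex.conj_I]
      all_goals try simp [Matrix.vecHead, Matrix.vecTail]
      all_goals try ring
      all_goals rfl
  · refine ⟨(0, 1, 0), (1, 0, 0), fun h => ?_⟩
    have h2 := htau (0, 1, 0) (1, 0, 0)
    rw [tauE2, h, sub_self] at h2
    have h01 := congrFun (congrFun h2.symm 0) 1
    simp [Complex.ext_iff] at h01
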